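/- Let s be a smooth and decomposable probabilistic circuit over variables X whose sum-node weights are positive and whose leaves are Gaussian densities. Then the distribution computed by s can be written as a finite mixture Σ_{t=1}^{τ} (∏_{(k,j)∈T_t} w_{kj}) · ∏_{i=1}^n p_t(X_i), where the sum ranges over all induced trees T_t of the circuit and each p_t(X_i) is a univariate Gaussian leaf; moreover the mixture coefficients ∏ w_{kj} are positive and sum to 1 when the circuit is normalized. -/

import Mathlib

/-!
Expanding every product of sums by distributivity writes the circuit as a sum over its induced
trees: the trees of a sum node are the disjoint union of its children's trees (weighted by the
edge weight), the trees of a product node are pairs of children's trees. An induced tree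
contributes the product of its sum weights times the product of its leaves; by decomposability
these leaves sit on pairwise distinct variables and by smoothness they cover the whole scope, so
the tree's density is a product of one univariate Gaussian per variable.
-/

open Real

/-- One-dimensional Gaussian density. -/
noncomputable def gaussPdf (m s x : ℝ) : ℝ :=
  (s * Real.sqrt (2 * π))⁻¹ * Real.exp (-(x - m)^2 / (2 * s^2))

/-- A probabilistic circuit over `n` variables with (binary) weighted sum nodes,
(binary) product nodes and univariate Gaussian leaves. -/
inductive PC (n : ℕ) : Type
  | leaf (i : Fin n) (m s : ℝ) : PC n
  | sum (w₁ w₂ : ℝ) (l r : PC n) : PC n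
  | prod (l r : PC n) : PC n

namespace PC

variable {n : ℕ}

/-- Scope of a node. -/
def scope : PC n → Finset (Fin n)
  | leaf i _ _ => {i}
  | sum _ _ l r => scope l ∪ scope r
  | prod l r => scope l ∪ scope r

/-- Smoothness: children of sum nodes share the same scope. -/
def Smooth : PC n → Prop
  | leaf _ _ _ => True
  | sum _ _ l r => scope l = scope r ∧ Smooth l ∧ Smooth r
  | prod l r => Smooth l ∧ Smooth r

/-- Decomposability: children of product nodes have disjoint scopes. -/
def Decomposable : PC n → Prop
  | leaf _ _ _ => True
  | sum _ _ l r => Decomposable l ∧ Decomposable r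
  | prod l r => Disjoint (scope l) (scope r) ∧ Decomposable l ∧ Decomposable r

/-- All sum weights are strictly positive. -/
def PosWeights : PC n → Prop
  | leaf _ _ _ => True
  | sum w₁ w₂ l r => 0 < w₁ ∧ 0 < w₂ ∧ PosWeights l ∧ PosWeights r
  | prod l r => PosWeights l ∧ PosWeights r

/-- Normalized circuit: the weights of every sum node sum to one. -/
def Normalized : PC n → Prop
  | leaf _ _ _ => True
  | sum w₁ w₂ l r => w₁ + w₂ = 1 ∧ Normalized l ∧ Normalized r
  | prod l r => Normalized l ∧ Normalized r

/-- Evaluation of the circuit. -/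
noncomputable def eval : PC n → (Fin n → ℝ) → ℝ
  | leaf i m s, x => gaussPdf m s (x i)
  | sum w₁ w₂ l r, x => w₁ * eval l x + w₂ * eval r x
  | prod l r, x => eval l x * eval r x

/-- Number of induced trees of the circuit. -/
def numTrees : PC n → ℕ
  | leaf _ _ _ => 1
  | sum _ _ l r => numTrees l + numTrees r
  | prod l r => numTrees l * numTrees r

def treeWeight : (c : PC n) → Fin c.numTrees → ℝ
  | leaf _ _ _, _ => 1
  | sum w₁ w₂ l r, t => Fin.addCases (w₁ * l.treeWeight ·) (w₂ * r.treeWeight ·) t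
  | prod l r, t =>
    l.treeWeight (finProdFinEquiv.symm t).1 * r.treeWeight (finProdFinEquiv.symm t).2

/-- The `(mean, std)` of the leaf on variable `i` in the induced tree `t`; a junk value when
`i ∉ c.scope`. -/
def treeLeaf : (c : PC n) → Fin c.numTrees → Fin n → ℝ × ℝ
  | leaf _ m s, _, _ => (m, s)
  | sum _ _ l r, t, i => Fin.addCases (l.treeLeaf · i) (r.treeLeaf · i) t
  | prod l r, t, i =>
    l.scope.piecewise (l.treeLeaf (finProdFinEquiv.symm t).1)
      (r.treeLeaf (finProdFinEquiv.symm t).2) i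

noncomputable def treeDensity (c : PC n) (t : Fin c.numTrees) (x : Fin n → ℝ) : ℝ :=
  ∏ i ∈ c.scope, gaussPdf (c.treeLeaf t i).1 (c.treeLeaf t i).2 (x i)

variable {w₁ w₂ : ℝ} {l r : PC n}

lemma sum_trees_leaf (i : Fin n) (m s : ℝ) (f : Fin (leaf i m s).numTrees → ℝ) :
    ∑ t, f t = f ⟨0, Nat.one_pos⟩ :=
  Fin.sum_univ_one f

lemma sum_trees_sum (f : Fin (sum w₁ w₂ l r).numTrees → ℝ) :
    ∑ t, f t = ∑ t, f (Fin.castAdd r.numTrees t) + ∑ t, f (Fin.natAdd l.numTrees t) :=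
  Fin.sum_univ_add f

lemma sum_trees_prod (f : Fin (prod l r).numTrees → ℝ) :
    ∑ t, f t = ∑ a, ∑ b, f (finProdFinEquiv (a, b)) :=
  (finProdFinEquiv.sum_comp f).symm.trans (Fintype.sum_prod_type _)

@[simp] lemma treeWeight_sum_castAdd (t : Fin l.numTrees) :
    (sum w₁ w₂ l r).treeWeight (Fin.castAdd r.numTrees t) = w₁ * l.treeWeight t :=
  Fin.addCases_left _

@[simp] lemma treeWeight_sum_natAdd (t : Fin r.numTrees) :
    (sum w₁ w₂ l r).treeWeight (Fin.natAdd l.numTrees t) = w₂ * r.treeWeight t :=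
  Fin.addCases_right _

@[simp] lemma treeWeight_prod (a : Fin l.numTrees) (b : Fin r.numTrees) :
    (prod l r).treeWeight (finProdFinEquiv (a, b)) = l.treeWeight a * r.treeWeight b := by
  simp [treeWeight]

@[simp] lemma treeLeaf_sum_castAdd (t : Fin l.numTrees) (i : Fin n) :
    (sum w₁ w₂ l r).treeLeaf (Fin.castAdd r.numTrees t) i = l.treeLeaf t i :=
  Fin.addCases_left _

@[simp] lemma treeLeaf_sum_natAdd (t : Fin r.numTrees) (i : Fin n) :
    (sum w₁ w₂ l r).treeLeaf (Fin.natAdd l.numTrees t) i = r.treeLeaf t i :=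
  Fin.addCases_right _

lemma treeDensity_sum_castAdd (h : l.scope = r.scope) (t : Fin l.numTrees) (x : Fin n → ℝ) :
    (sum w₁ w₂ l r).treeDensity (Fin.castAdd r.numTrees t) x = l.treeDensity t x := by
  simp only [treeDensity, treeLeaf_sum_castAdd, scope, ← h, Finset.union_self]

lemma treeDensity_sum_natAdd (h : l.scope = r.scope) (t : Fin r.numTrees) (x : Fin n → ℝ) :
    (sum w₁ w₂ l r).treeDensity (Fin.natAdd l.numTrees t) x = r.treeDensity t x := by
  simp only [treeDensity, treeLeaf_sum_natAdd, scope, h, Finset.union_self]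

lemma treeDensity_prod (h : Disjoint l.scope r.scope) (a : Fin l.numTrees) (b : Fin r.numTrees)
    (x : Fin n → ℝ) :
    (prod l r).treeDensity (finProdFinEquiv (a, b)) x = l.treeDensity a x * r.treeDensity b x := by
  simp only [treeDensity, treeLeaf, scope, Equiv.symm_apply_apply]
  rw [Finset.prod_union h]
  congr 1 <;> refine Finset.prod_congr rfl fun i hi => ?_
  · simp [hi]
  · simp [Finset.disjoint_right.mp h hi]

lemma treeWeight_pos {c : PC n} (hc : c.PosWeights) (t : Fin c.numTrees) :
    0 < c.treeWeight t := by
  induction c with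
  | leaf => exact one_pos
  | sum w₁ w₂ l r ihl ihr =>
    obtain ⟨hw₁, hw₂, hl, hr⟩ := hc
    induction t using Fin.addCases with
    | left t => simpa using mul_pos hw₁ (ihl hl t)
    | right t => simpa using mul_pos hw₂ (ihr hr t)
  | prod l r ihl ihr => exact mul_pos (ihl hc.1 _) (ihr hc.2 _)

lemma sum_treeWeight {c : PC n} (hc : c.Normalized) : ∑ t, c.treeWeight t = 1 := by
  induction c with
  | leaf => exact Fin.sum_univ_one _
  | sum w₁ w₂ l r ihl ihr =>
    obtain ⟨hw, hl, hr⟩ := hc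
    rw [sum_trees_sum]
    simp [← Finset.mul_sum, ihl hl, ihr hr, hw]
  | prod l r ihl ihr =>
    rw [sum_trees_prod]
    simp [← Finset.sum_mul_sum, ihl hc.1, ihr hc.2]

theorem eval_eq_sum_treeWeight_mul_treeDensity {c : PC n} (hs : c.Smooth) (hd : c.Decomposable)
    (x : Fin n → ℝ) : c.eval x = ∑ t, c.treeWeight t * c.treeDensity t x := by
  induction c with
  | leaf i m s =>
    rw [sum_trees_leaf]
    simp [eval, treeWeight, treeDensity, treeLeaf, scope]
  | sum w₁ w₂ l r ihl ihr =>
    obtain ⟨hlr, hl, hr⟩ := hs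
    rw [eval, ihl hl hd.1, ihr hr hd.2, sum_trees_sum]
    simp only [treeWeight_sum_castAdd, treeWeight_sum_natAdd, treeDensity_sum_castAdd hlr,
      treeDensity_sum_natAdd hlr, Finset.mul_sum, mul_assoc]
  | prod l r ihl ihr =>
    rw [eval, ihl hs.1 hd.2.1, ihr hs.2 hd.2.2, Finset.sum_mul_sum, sum_trees_prod]
    simp only [treeWeight_prod, treeDensity_prod hd.1, mul_mul_mul_comm]

end PC

/-- A smooth, decomposable probabilistic circuit with positive sum weights and Gaussian
leaves over all `n` variables equals a finite mixture, indexed by its induced trees, of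
products of univariate Gaussian leaf densities; the mixture coefficients are positive and,
if the circuit is normalized, sum to one. -/
theorem pc_induced_tree_mixture {n : ℕ} (c : PC n)
    (hsmooth : c.Smooth) (hdec : c.Decomposable) (hpos : c.PosWeights)
    (hscope : c.scope = Finset.univ) :
    ∃ (w : Fin c.numTrees → ℝ) (m s : Fin c.numTrees → Fin n → ℝ),
      (∀ t, 0 < w t) ∧
      (c.Normalized → ∑ t, w t = 1) ∧
      ∀ x : Fin n → ℝ, c.eval x = ∑ t, w t * ∏ i, gaussPdf (m t i) (s t i) (x i) :=
  ⟨c.treeWeight, fun t i => (c.treeLeaf t i).1, fun t i => (c.treeLeaf t i).2,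
    PC.treeWeight_pos hpos, PC.sum_treeWeight, fun x => by
      rw [PC.eval_eq_sum_treeWeight_mul_treeDensity hsmooth hdec x, ← hscope]; rfl⟩
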